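/- Let v = ∏_{i≥0} 0·1^{2t_i+1}, with t_i the Thue–Morse sequence. Then for every morphic involution g of {0,1}* (identity or complement), v contains no factor of the form g(x)·x·x·g(x) with x nonempty. -/

import Mathlib

def tm (i : Nat) : Nat := (Nat.digits 2 i).sum % 2

/-- Block `0 1^(2 t_i+1)` of the word **v**. -/
def vBlock (i : Nat) : List Bool := [false] ++ List.replicate (2 * tm i + 1) true

def vPrefix (n : Nat) : List Bool := ((List.range n).map vBlock).flatten

/-- `L` is a factor of the infinite word **v**. -/
def IsFactorV (L : List Bool) : Prop := ∃ n, L <:+: vPrefix n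

/-!
Read `v` as a sequence `vSeq`: its zeros are the block starts `blockStart i`, which are all even,
with consecutive gaps `2 tm i + 2`.

For `g = id`, an occurrence of `xxxx` with `|x| = l` is an `l`-periodic window of length `4 l`.
It has a zero in its first period, and periodicity shifts the block starts inside the window by
`l`, hence the block indices by some `d > 0`; comparing gaps gives a cube of period `d` in the
Thue–Morse word, which is cube-free.

For `g` the complement, the letter `x[0]` gives two zeros at distance `l` (in the two middle
copies if it is `0`) or `3 l` (in the outer copies if it is `1`), so `l` and the start are even;
then `x[1]` gives a zero at an odd position.
-/
theorem tm_le_one (n : ℕ) : tm n ≤ 1 :=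
  Nat.le_of_lt_succ (Nat.mod_lt _ two_pos)

theorem tm_two_mul (n : ℕ) : tm (2 * n) = tm n := by
  rcases Nat.eq_zero_or_pos n with rfl | hn
  · rfl
  · rw [tm, Nat.digits_def' one_lt_two (by omega), Nat.mul_mod_right,
      Nat.mul_div_cancel_left _ two_pos, List.sum_cons, zero_add, tm]

theorem tm_two_mul_add_one (n : ℕ) : tm (2 * n + 1) = 1 - tm n := by
  rw [tm, Nat.digits_def' one_lt_two (by omega), List.sum_cons,
    show (2 * n + 1) % 2 = 1 by omega, show (2 * n + 1) / 2 = n by omega]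
  unfold tm
  omega

theorem tm_bit_eq_iff {r : ℕ} (hr : r < 2) (a b : ℕ) :
    tm (2 * a + r) = tm (2 * b + r) ↔ tm a = tm b := by
  have := tm_le_one a
  have := tm_le_one b
  interval_cases r
  · simp only [add_zero, tm_two_mul]
  · rw [tm_two_mul_add_one, tm_two_mul_add_one]
    omega

theorem tm_ne_succ_of_even {n : ℕ} (hn : Even n) : tm n ≠ tm (n + 1) := by
  obtain ⟨a, rfl⟩ := hn
  rw [← two_mul, tm_two_mul, tm_two_mul_add_one]
  have := tm_le_one a
  omega

theorem tm_not_three_eq (n : ℕ) : ¬ (tm n = tm (n + 1) ∧ tm (n + 1) = tm (n + 2)) := by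
  rintro ⟨h₁, h₂⟩
  rcases Nat.even_or_odd n with hn | hn
  · exact tm_ne_succ_of_even hn h₁
  · exact tm_ne_succ_of_even hn.add_one h₂

theorem tm_not_alternating (m : ℕ) : ¬ ∀ k < 4, tm (m + k) ≠ tm (m + k + 1) := by
  intro H
  -- the pairs at the odd positions `2a + 1 ∈ {m, m + 1}` and `2a + 3` halve to a triple at `a`
  set a := m / 2
  have h₁ := H (2 * a + 1 - m) (by omega)
  have h₂ := H (2 * a + 3 - m) (by omega)
  rw [show m + (2 * a + 1 - m) = 2 * a + 1 by omega,
    show 2 * a + 1 + 1 = 2 * (a + 1) by ring] at h₁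
  rw [show m + (2 * a + 3 - m) = 2 * (a + 1) + 1 by omega,
    show 2 * (a + 1) + 1 + 1 = 2 * (a + 2) by ring] at h₂
  rw [tm_two_mul_add_one, tm_two_mul] at h₁ h₂
  have := tm_le_one a
  have := tm_le_one (a + 1)
  have := tm_le_one (a + 2)
  exact tm_not_three_eq a ⟨by omega, by omega⟩

theorem tm_cube_free {z : ℕ} (hz : 0 < z) (m : ℕ) :
    ¬ ∀ k < 2 * z, tm (m + k + z) = tm (m + k) := by
  induction z using Nat.strong_induction_on generalizing m with
  | _ z ih =>
  intro H
  obtain ⟨q, rfl | rfl⟩ := Nat.even_or_odd' z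
  · refine ih q (by omega) (by omega) (m / 2) fun k hk => ?_
    have h := H (2 * k) (by omega)
    rwa [show m + 2 * k + 2 * q = 2 * (m / 2 + k + q) + m % 2 by omega,
      show m + 2 * k = 2 * (m / 2 + k) + m % 2 by omega,
      tm_bit_eq_iff (Nat.mod_lt _ two_pos)] at h
  · rcases Nat.eq_zero_or_pos q with rfl | hq
    · exact tm_not_three_eq m ⟨(H 0 (by omega)).symm, (H 1 (by omega)).symm⟩
    · refine tm_not_alternating m fun k hk heq => ?_
      -- one of the two equal pairs at `m + k` and `m + k + z` starts at an even position
      rcases Nat.even_or_odd (m + k) with he | ho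
      · exact tm_ne_succ_of_even he heq
      · refine tm_ne_succ_of_even (ho.add_odd (odd_two_mul_add_one q)) ?_
        rw [H k (by omega), show m + k + (2 * q + 1) + 1 = m + (k + 1) + (2 * q + 1) by ring,
          H (k + 1) (by omega), ← add_assoc]
        exact heq

def blockStart : ℕ → ℕ
  | 0 => 0
  | i + 1 => blockStart i + 2 * tm i + 2

theorem blockStart_succ (i : ℕ) : blockStart (i + 1) = blockStart i + 2 * tm i + 2 := rfl

theorem strictMono_blockStart : StrictMono blockStart :=
  strictMono_nat_of_lt_succ fun i => by rw [blockStart_succ]; omega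

theorem even_blockStart (i : ℕ) : Even (blockStart i) := by
  induction i with
  | zero => exact even_iff_two_dvd.2 (dvd_zero 2)
  | succ i ih => exact (ih.add (even_two_mul _)).add even_two

theorem blockStart_succ_le (i : ℕ) : blockStart (i + 1) ≤ blockStart i + 4 := by
  have := tm_le_one i
  rw [blockStart_succ]
  omega

/-- The infinite word `v` as a sequence; its `0`s (`false`) are exactly the block starts. -/
def vSeq (k : ℕ) : Bool := !decide (∃ i ≤ k, blockStart i = k)

theorem vSeq_eq_false_iff {k : ℕ} : vSeq k = false ↔ k ∈ Set.range blockStart := by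
  simp only [vSeq, Bool.not_eq_false', decide_eq_true_eq, Set.mem_range]
  exact ⟨fun ⟨i, _, hi⟩ => ⟨i, hi⟩,
    fun ⟨i, hi⟩ => ⟨i, hi ▸ strictMono_blockStart.id_le i, hi⟩⟩

theorem vSeq_blockStart (i : ℕ) : vSeq (blockStart i) = false :=
  vSeq_eq_false_iff.2 ⟨i, rfl⟩

theorem vSeq_eq_true_of_lt_of_lt {i k : ℕ} (h₁ : blockStart i < k)
    (h₂ : k < blockStart (i + 1)) :
    vSeq k = true := by
  rw [← Bool.not_eq_false, vSeq_eq_false_iff]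
  rintro ⟨j, rfl⟩
  have := strictMono_blockStart.lt_iff_lt.1 h₁
  have := strictMono_blockStart.lt_iff_lt.1 h₂
  omega

theorem even_of_vSeq_eq_false {k : ℕ} (h : vSeq k = false) : Even k := by
  obtain ⟨i, rfl⟩ := vSeq_eq_false_iff.1 h
  exact even_blockStart i

theorem exists_vSeq_eq_false (k : ℕ) : ∃ e < 4, vSeq (k + e) = false := by
  suffices h : ∃ i, k ≤ blockStart i ∧ blockStart i < k + 4 by
    obtain ⟨i, h₁, h₂⟩ := h
    exact ⟨blockStart i - k, by omega, by rw [Nat.add_sub_cancel' h₁, vSeq_blockStart]⟩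
  induction k with
  | zero => exact ⟨0, le_rfl, by decide⟩
  | succ k ih =>
    obtain ⟨i, h₁, h₂⟩ := ih
    rcases h₁.lt_or_eq with h₁ | h₁
    · exact ⟨i, h₁, by omega⟩
    · have := strictMono_blockStart (lt_add_one i)
      have := blockStart_succ_le i
      exact ⟨i + 1, by omega, by omega⟩

theorem map_vSeq_range'_blockStart (i : ℕ) :
    (List.range' (blockStart i) (2 * tm i + 2)).map vSeq = vBlock i := by
  rw [List.range'_succ, List.map_cons, vSeq_blockStart, vBlock, List.singleton_append,
    List.cons_inj_right, List.eq_replicate_iff, List.length_map, List.length_range']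
  refine ⟨rfl, fun b hb => ?_⟩
  obtain ⟨k, hk, rfl⟩ := List.mem_map.1 hb
  rw [List.mem_range'_1] at hk
  exact vSeq_eq_true_of_lt_of_lt (i := i) (by omega) (by rw [blockStart_succ]; omega)

theorem vPrefix_eq_map_vSeq (n : ℕ) : vPrefix n = (List.range (blockStart n)).map vSeq := by
  induction n with
  | zero => rfl
  | succ n ih =>
    rw [vPrefix, List.range_succ, List.map_append, List.flatten_append, ← vPrefix, ih,
      blockStart_succ, add_assoc, List.range_eq_range', List.range_eq_range',
      ← List.range'_append, List.map_append]
    simp [map_vSeq_range'_blockStart]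

def OccursAt (L : List Bool) (m : ℕ) : Prop :=
  ∀ j (hj : j < L.length), L[j] = vSeq (m + j)

theorem IsFactorV.exists_occursAt {L : List Bool} (h : IsFactorV L) : ∃ m, OccursAt L m := by
  obtain ⟨n, s, t, hst⟩ := h
  rw [vPrefix_eq_map_vSeq] at hst
  refine ⟨s.length, fun j hj => ?_⟩
  rw [List.getElem_append_right' s hj, List.getElem_append_left' _ t]
  simp only [hst, List.getElem_map, List.getElem_range, add_comm]

theorem OccursAt.append {a b : List Bool} {m : ℕ} (h : OccursAt (a ++ b) m) :
    OccursAt a m ∧ OccursAt b (m + a.length) := by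
  refine ⟨fun j hj => ?_, fun j hj => ?_⟩
  · rw [List.getElem_append_left' hj b, h]
  · rw [List.getElem_append_right' a hj, h, add_comm j, add_assoc]

theorem apply_add_mod_eq_of_periodic {α : Type*} {f : ℕ → α} {m l n : ℕ}
    (h : ∀ j < n, f (m + l + j) = f (m + j)) : ∀ j < n + l, f (m + j) = f (m + j % l) := by
  intro j
  induction j using Nat.strong_induction_on with
  | _ j ih =>
  intro hj
  rcases Nat.lt_or_ge j l with hjl | hjl
  · rw [Nat.mod_eq_of_lt hjl]
  · rcases Nat.eq_zero_or_pos l with rfl | hl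
    · rw [Nat.mod_zero]
    · rw [Nat.mod_eq_sub_mod hjl, ← ih (j - l) (by omega) (by omega), ← h (j - l) (by omega),
        add_assoc, Nat.add_sub_cancel' hjl]

theorem StrictMono.apply_add_eq_of_mem_range_iff {P : ℕ → ℕ} (hP : StrictMono P)
    {a b l i j : ℕ}
    (hrange : ∀ p, a ≤ p → p < b → (p + l ∈ Set.range P ↔ p ∈ Set.range P))
    (ha : a ≤ P i) (hij : P j = P i + l) :
    ∀ k, P (i + k) < b → P (j + k) = P (i + k) + l := by
  intro k
  induction k with
  | zero => exact fun _ => hij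
  | succ k ih =>
    rw [← add_assoc, ← add_assoc]
    intro hk
    have hstep : P (i + k) < P (i + k + 1) := hP (lt_add_one _)
    have ih := ih (by omega)
    have hai : P i ≤ P (i + k) := hP.monotone (by omega)
    obtain ⟨q, hq⟩ := (hrange (P (i + k + 1)) (by omega) hk).2 ⟨_, rfl⟩
    have hle : P (j + k + 1) ≤ P q := hP.monotone (hP.lt_iff_lt.1 (by omega))
    have hgt : P (j + k) < P (j + k + 1) := hP (lt_add_one _)
    obtain ⟨r, hr⟩ := (hrange (P (j + k + 1) - l) (by omega) (by omega)).1
      ⟨j + k + 1, by omega⟩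
    have hge : P (i + k + 1) ≤ P r := hP.monotone (hP.lt_iff_lt.1 (by omega))
    omega

theorem not_vSeq_periodic {m l : ℕ} (hl : 0 < l) :
    ¬ ∀ j < 3 * l, vSeq (m + l + j) = vSeq (m + j) := by
  intro hper
  obtain ⟨e, he, hze⟩ := exists_vSeq_eq_false m
  set r := e % l
  have hr : r < l := Nat.mod_lt _ hl
  rw [apply_add_mod_eq_of_periodic hper e (by omega)] at hze
  obtain ⟨i, hi⟩ := vSeq_eq_false_iff.1 hze
  obtain ⟨i', hi'⟩ := vSeq_eq_false_iff.1
    (show vSeq (m + l + r) = false by rw [hper r (by omega), hze])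
  have hii' : i < i' := strictMono_blockStart.lt_iff_lt.1 (by omega)
  obtain ⟨d, rfl⟩ : ∃ d, i' = i + d := ⟨i' - i, by omega⟩
  have hd : 0 < d := by omega
  have hrange : ∀ p, m ≤ p → p < m + 3 * l →
      (p + l ∈ Set.range blockStart ↔ p ∈ Set.range blockStart) := by
    intro p h₁ h₂
    rw [← vSeq_eq_false_iff, ← vSeq_eq_false_iff, show p + l = m + l + (p - m) by omega,
      hper _ (by omega), Nat.add_sub_cancel' h₁]
  have shift := strictMono_blockStart.apply_add_eq_of_mem_range_iff hrange (by omega)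
    (show blockStart (i + d) = blockStart i + l by omega)
  have h2d : blockStart (i + d + d) = m + l + l + r := by
    rw [shift d (by omega)]
    omega
  -- block starts are shifted by `l`, so block lengths, i.e. `tm`, are `d`-periodic
  refine tm_cube_free hd i fun k hk => ?_
  have hbound : blockStart (i + k + 1) ≤ blockStart (i + d + d) :=
    strictMono_blockStart.monotone (by omega)
  have h₁ := shift k (by have := strictMono_blockStart (lt_add_one (i + k)); omega)
  have h₂ := shift (k + 1) (by rw [← add_assoc]; omega)
  rw [show i + d + (k + 1) = i + k + d + 1 by ring, ← add_assoc, blockStart_succ,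
    blockStart_succ] at h₂
  rw [show i + d + k = i + k + d by ring] at h₁
  omega

theorem not_occursAt_fourth_power {x : List Bool} (hx : x ≠ []) (m : ℕ) :
    ¬ OccursAt (x ++ x ++ x ++ x) m := by
  intro h
  have h₁ := h.append.1
  have h₂ := (show OccursAt (x ++ (x ++ x ++ x)) m by
    simpa only [List.append_assoc] using h).append.2
  refine not_vSeq_periodic (m := m) (List.length_pos_iff.2 hx) fun j hj => ?_
  have hj' : j < (x ++ x ++ x).length := by simp only [List.length_append]; omega
  rw [← h₂ j hj', h₁ j hj']

theorem not_occursAt_compl_pattern {x : List Bool} (hx : x ≠ []) (m : ℕ) :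
    ¬ OccursAt (x.map not ++ x ++ x ++ x.map not) m := by
  intro h
  obtain ⟨h, h₄⟩ := h.append
  obtain ⟨h, h₃⟩ := h.append
  obtain ⟨h₁, h₂⟩ := h.append
  simp only [List.length_append, List.length_map] at h₁ h₂ h₃ h₄
  set l := x.length
  have key : ∀ j < l, (Even (m + l + j) ∧ Even (m + (l + l) + j)) ∨
      (Even (m + j) ∧ Even (m + (l + l + l) + j)) := by
    intro j hj
    have e₁ := h₁ j (by simpa using hj)
    have e₄ := h₄ j (by simpa using hj)
    rw [List.getElem_map] at e₁ e₄
    cases hxj : x[j]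
    · exact .inl ⟨even_of_vSeq_eq_false (hxj ▸ h₂ j hj).symm,
        even_of_vSeq_eq_false (hxj ▸ h₃ j hj).symm⟩
    · exact .inr ⟨even_of_vSeq_eq_false (hxj ▸ e₁).symm,
        even_of_vSeq_eq_false (hxj ▸ e₄).symm⟩
  simp only [Nat.even_iff] at key
  have hl : 0 < l := List.length_pos_iff.2 hx
  have := key 0 hl
  rcases Nat.lt_or_ge 1 l with hl₁ | hl₁
  · have := key 1 hl₁
    omega
  · omega

theorem stmt13 (x : List Bool) (hx : x ≠ []) (g : List Bool → List Bool)
    (hg : (∀ l, g l = l) ∨ (∀ l, g l = l.map (fun b => !b))) :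
    ¬ IsFactorV (g x ++ x ++ x ++ g x) := by
  intro hfac
  obtain ⟨m, hm⟩ := hfac.exists_occursAt
  rcases hg with hg | hg <;> rw [hg x] at hm
  · exact not_occursAt_fourth_power hx m hm
  · exact not_occursAt_compl_pattern hx m hm
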